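/- arXiv:1111.7088 — 7 statements merged into one kernel-verified Lean document; each statement's English description precedes it below -/
import Mathlib

section
/- Let Ω₁,…,Ωₙ be diagonal 2×2 complex matrices, and let z₁ = (ω₁₁,…,ωₙ₁), z₂ = (ω₁₂,…,ωₙ₂) ∈ ℂⁿ be the vectors of first and second diagonal entries. Then every invertible 2×2 complex matrix X such that Xᴴ Ω_i X̄ is diagonal for all i lies in 𝒢(2) (diagonal times permutation) if and only if z₁ and z₂ are not collinear, i.e., the 2×n matrix with rows z₁*, z₂* has rank 2. -/
open Matrix Complex

/-- The group `𝒢(m)` of invertible matrices of the form `D * P` with `D`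
invertible diagonal and `P` a permutation matrix, as a predicate. -/
def inG (m : ℕ) (X : Matrix (Fin m) (Fin m) ℂ) : Prop :=
  ∃ (D : Matrix (Fin m) (Fin m) ℂ) (σ : Equiv.Perm (Fin m)),
    D.IsDiag ∧ IsUnit D.det ∧ X = D * σ.permMatrix ℂ

lemma rank_two_iff' (n : ℕ) (M : Matrix (Fin 2) (Fin n) ℂ) :
    M.rank = 2 ↔ ∀ c : Fin 2 → ℂ, (∀ i, M 0 i * c 0 + M 1 i * c 1 = 0) → c = 0 := by
  rw [← Matrix.rank_transpose]
  have hrn := (Matrix.mulVecLin Mᵀ).finrank_range_add_finrank_ker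
  have hdom : Module.finrank ℂ (Fin 2 → ℂ) = 2 := by simp [Module.finrank_pi]
  rw [hdom] at hrn
  have : Mᵀ.rank = 2 ↔ LinearMap.ker (Matrix.mulVecLin Mᵀ) = ⊥ := by
    rw [← Submodule.finrank_eq_zero (R := ℂ)]
    unfold Matrix.rank
    omega
  rw [this, Matrix.ker_mulVecLin_eq_bot_iff]
  constructor
  · intro h c hc
    apply h
    ext i
    simp [Matrix.mulVec, dotProduct, Fin.sum_univ_two, Matrix.transpose_apply]
    linear_combination hc i
  · intro h c hc
    apply h
    intro i
    have := congr_fun hc i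
    simpa [Matrix.mulVec, dotProduct, Fin.sum_univ_two, Matrix.transpose_apply] using this

lemma offdiag_iff' (X : Matrix (Fin 2) (Fin 2) ℂ) (d : Fin 2 → ℂ) :
    (Xᴴ * Matrix.diagonal d * X.map (starRingEnd ℂ)).IsDiag ↔
      d 0 * (starRingEnd ℂ) (X 0 0 * X 0 1) + d 1 * (starRingEnd ℂ) (X 1 0 * X 1 1) = 0 := by
  have e01 : (Xᴴ * Matrix.diagonal d * X.map (starRingEnd ℂ)) 0 1 =
      d 0 * (starRingEnd ℂ) (X 0 0 * X 0 1) + d 1 * (starRingEnd ℂ) (X 1 0 * X 1 1) := by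
    simp [Matrix.mul_apply, Fin.sum_univ_two, Matrix.diagonal_apply, conjTranspose_apply,
      Matrix.map_apply]
    ring
  have e10 : (Xᴴ * Matrix.diagonal d * X.map (starRingEnd ℂ)) 1 0 =
      d 0 * (starRingEnd ℂ) (X 0 0 * X 0 1) + d 1 * (starRingEnd ℂ) (X 1 0 * X 1 1) := by
    simp [Matrix.mul_apply, Fin.sum_univ_two, Matrix.diagonal_apply, conjTranspose_apply,
      Matrix.map_apply]
    ring
  constructor
  · intro h
    rw [← e01]
    exact h (by decide)
  · intro h i j hij
    fin_cases i <;> fin_cases j <;> simp_all [e01, e10]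

lemma permMatrix_apply' (σ : Equiv.Perm (Fin 2)) :
    ∀ i j : Fin 2, (σ.permMatrix ℂ) i j = if σ i = j then 1 else 0 := by
  intro i j; simp [Equiv.Perm.permMatrix, PEquiv.toMatrix_apply, Equiv.toPEquiv]

lemma inG_prod_zero' (D : Matrix (Fin 2) (Fin 2) ℂ) (σ : Equiv.Perm (Fin 2)) (hD : D.IsDiag) :
    ∀ i : Fin 2, (D * σ.permMatrix ℂ) i 0 * (D * σ.permMatrix ℂ) i 1 = 0 := by
  have hX : ∀ i j, j ≠ σ i → (D * σ.permMatrix ℂ) i j = 0 := by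
    intro i j hj
    rw [Matrix.mul_apply]
    apply Finset.sum_eq_zero
    intro k _
    by_cases hk : k = i
    · subst hk
      rw [permMatrix_apply']
      simp only [if_neg (Ne.symm hj), mul_zero]
    · rw [hD (Ne.symm hk), zero_mul]
  intro i
  by_cases h0 : σ i = 0
  · rw [hX i 1 (by rw [h0]; decide), mul_zero]
  · rw [hX i 0 (fun h => h0 h.symm), zero_mul]

lemma prod_zero_inG' (X : Matrix (Fin 2) (Fin 2) ℂ) (hdet : IsUnit X.det)
    (h0 : X 0 0 * X 0 1 = 0) (h1 : X 1 0 * X 1 1 = 0) : inG 2 X := by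
  rw [Matrix.det_fin_two] at hdet
  by_cases h01 : X 0 1 = 0
  · -- diagonal case
    have h10 : X 1 0 = 0 := by
      rcases mul_eq_zero.1 h1 with h | h
      · exact h
      · exfalso; apply hdet.ne_zero; rw [h01, h]; ring
    refine ⟨X, 1, ?_, ?_, ?_⟩
    · intro i j hij
      fin_cases i <;> fin_cases j <;> simp_all
    · rw [Matrix.det_fin_two, h01, h10]
      simpa [h01, h10] using hdet
    · ext i j
      rw [Matrix.mul_apply, Fin.sum_univ_two, permMatrix_apply', permMatrix_apply']
      fin_cases i <;> fin_cases j <;> simp [h01, h10]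
  · -- antidiagonal case
    have h00 : X 0 0 = 0 := by
      rcases mul_eq_zero.1 h0 with h | h
      · exact h
      · exact absurd h h01
    have h11 : X 1 1 = 0 := by
      rcases mul_eq_zero.1 h1 with h | h
      · exfalso; apply hdet.ne_zero; rw [h00, h]; ring
      · exact h
    refine ⟨!![X 0 1, 0; 0, X 1 0], Equiv.swap 0 1, ?_, ?_, ?_⟩
    · intro i j hij
      fin_cases i <;> fin_cases j <;> simp_all
    · rw [Matrix.det_fin_two]
      rw [h00, h11] at hdet
      have h2 := hdet.neg
      have : !![X 0 1, 0; 0, X 1 0] 0 0 * !![X 0 1, 0; 0, X 1 0] 1 1 -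
          !![X 0 1, 0; 0, X 1 0] 0 1 * !![X 0 1, 0; 0, X 1 0] 1 0 =
          -(0 * 0 - X 0 1 * X 1 0) := by
        simp
      rw [this]
      exact h2
    · ext i j
      rw [Matrix.mul_apply, Fin.sum_univ_two, permMatrix_apply', permMatrix_apply']
      fin_cases i <;> fin_cases j <;> simp [h00, h11, Equiv.swap_apply_def]

/-- Every invertible joint diagonalizer (w.r.t. transpose-type
congruence `Xᴴ Ω X̄`) of the diagonal matrices `Ω i = diagonal (ω i)` lies in
`𝒢(2)` iff the 2×n matrix with rows `z₁*`, `z₂*` has rank 2, where `z k` is the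
vector of k-th diagonal entries. -/
theorem stmt_2 (n : ℕ) (ω : Fin n → Fin 2 → ℂ) :
    (∀ X : Matrix (Fin 2) (Fin 2) ℂ, IsUnit X.det →
        (∀ i, (Xᴴ * Matrix.diagonal (ω i) * X.map (starRingEnd ℂ)).IsDiag) →
        inG 2 X) ↔
      (Matrix.of fun (k : Fin 2) (i : Fin n) => (starRingEnd ℂ) (ω i k)).rank = 2 := by
  rw [rank_two_iff']
  simp only [Matrix.of_apply]
  constructor
  · intro h c hc
    by_cases hczero : c = 0
    · exact hczero
    -- build an invertible X with X00*X01 = c 0 and X10*X11 = c 1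
    obtain ⟨X, hdet, hX0, hX1⟩ : ∃ X : Matrix (Fin 2) (Fin 2) ℂ, IsUnit X.det ∧
        X 0 0 * X 0 1 = c 0 ∧ X 1 0 * X 1 1 = c 1 := by
      by_cases h1 : c 1 = 0
      · have h0 : c 0 ≠ 0 := by
          intro h0
          apply hczero
          funext k; fin_cases k <;> assumption
        refine ⟨!![c 0, 1; 0, 1], ?_, by simp, by simp [h1]⟩
        rw [Matrix.det_fin_two_of]
        simpa using isUnit_iff_ne_zero.2 h0
      · by_cases heq : c 0 = c 1
        · refine ⟨!![c 0, 1; 2 * c 1, 1/2], ?_, by simp, by simp; ring⟩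
          rw [Matrix.det_fin_two_of]
          apply isUnit_iff_ne_zero.2
          intro hz
          rw [heq] at hz
          apply h1
          linear_combination (-2/3 : ℂ) * hz
        · refine ⟨!![c 0, 1; c 1, 1], ?_, by simp, by simp⟩
          rw [Matrix.det_fin_two_of]
          apply isUnit_iff_ne_zero.2
          intro hz
          apply heq
          linear_combination hz
    have hdiag : ∀ i, (Xᴴ * Matrix.diagonal (ω i) * X.map (starRingEnd ℂ)).IsDiag := by
      intro i
      rw [offdiag_iff', hX0, hX1]
      have := congrArg (starRingEnd ℂ) (hc i)
      simpa [map_add, _root_.map_mul, Complex.conj_conj] using this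
    obtain ⟨D, σ, hD, -, rfl⟩ := h X hdet hdiag
    have hz := inG_prod_zero' D σ hD
    have hc0 : c 0 = 0 := by rw [← hX0]; exact hz 0
    have hc1 : c 1 = 0 := by rw [← hX1]; exact hz 1
    funext k
    fin_cases k <;> simp [hc0, hc1]
  · intro h X hdet hdiag
    have key : ∀ i, ω i 0 * (starRingEnd ℂ) (X 0 0 * X 0 1) +
        ω i 1 * (starRingEnd ℂ) (X 1 0 * X 1 1) = 0 := fun i => (offdiag_iff' X (ω i)).1 (hdiag i)
    have hc := h ![X 0 0 * X 0 1, X 1 0 * X 1 1] (by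
      intro i
      have := congrArg (starRingEnd ℂ) (key i)
      simpa [map_add, _root_.map_mul, Complex.conj_conj] using this)
    apply prod_zero_inG' X hdet
    · exact congr_fun hc 0
    · exact congr_fun hc 1
end

section
/- Let Ω₁,…,Ωₙ be diagonal 2×2 real matrices. Then every invertible 2×2 complex matrix X such that Xᴴ Ω_i X is diagonal for all i lies in 𝒢(2) if and only if the vectors z₁ = (ω₁₁,…,ωₙ₁) and z₂ = (ω₁₂,…,ωₙ₂) in ℝⁿ are linearly independent. -/
open Matrix Complex

/-!
The off-diagonal entry of `Xᴴ Ωᵢ X` is `∑ₖ ωᵢₖ conj(Xₖ₀) Xₖ₁`, so all `Xᴴ Ωᵢ X` are diagonal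
exactly when the vector `p = (conj(Xₖ₀) Xₖ₁)ₖ ∈ ℂ²` satisfies `p₀ z₁ + p₁ z₂ = 0`. If `z₁, z₂` are
independent (over `ℝ`, hence over `ℂ`), then `p = 0`: every row of `X` has a zero, and an
invertible `2 × 2` matrix with this property is diagonal or antidiagonal. Conversely a real
relation `s z₁ + t z₂ = 0` with `(s, t) ≠ 0` is realised as `p` by the invertible matrix
`[[1, s], [r, t / r]]` for a suitable real `r ≠ 0`, whose first column has two nonzero entries.
-/

lemma Matrix.mul_permMatrix_apply {ι R : Type*} [Fintype ι] [DecidableEq ι]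
    [NonAssocSemiring R] (A : Matrix ι ι R) (σ : Equiv.Perm ι) (i j : ι) :
    (A * σ.permMatrix R) i j = A i (σ.symm j) := by
  rw [PEquiv.mul_toMatrix_toPEquiv]
  rfl

lemma inG_of_isDiag_mul_permMatrix {m : ℕ} {X : Matrix (Fin m) (Fin m) ℂ} (hX : IsUnit X.det)
    (σ : Equiv.Perm (Fin m)) (h : (X * σ.permMatrix ℂ).IsDiag) : inG m X := by
  refine ⟨X * σ.permMatrix ℂ, σ⁻¹, h, ?_, ?_⟩
  · rw [det_mul, det_permutation]
    exact hX.mul (by simp)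
  · rw [Matrix.mul_assoc, ← permMatrix_mul, inv_mul_cancel, permMatrix_one, Matrix.mul_one]

lemma not_inG_of_column {m : ℕ} {X : Matrix (Fin m) (Fin m) ℂ} {i i' j : Fin m} (hii' : i ≠ i')
    (hi : X i j ≠ 0) (hi' : X i' j ≠ 0) : ¬ inG m X := by
  rintro ⟨D, σ, hD, -, rfl⟩
  rw [mul_permMatrix_apply] at hi hi'
  exact hii' ((not_not.mp fun h => hi (hD h)).trans (not_not.mp fun h => hi' (hD h)).symm)

lemma Matrix.isDiag_fin_two_iff {α : Type*} [Zero α] {A : Matrix (Fin 2) (Fin 2) α} :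
    A.IsDiag ↔ A 0 1 = 0 ∧ A 1 0 = 0 := by
  refine ⟨fun h => ⟨h (by decide), h (by decide)⟩, fun ⟨h01, h10⟩ i j hij => ?_⟩
  fin_cases i <;> fin_cases j <;> simp_all

lemma Matrix.IsHermitian.isDiag_fin_two_iff {α : Type*} [AddMonoid α] [StarAddMonoid α]
    {A : Matrix (Fin 2) (Fin 2) α} (hA : A.IsHermitian) : A.IsDiag ↔ A 0 1 = 0 := by
  rw [Matrix.isDiag_fin_two_iff, ← hA.apply 0 1, star_eq_zero, and_self]

lemma isDiag_conjTranspose_mul_diagonal_ofReal_mul_iff (X : Matrix (Fin 2) (Fin 2) ℂ)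
    (d : Fin 2 → ℝ) :
    (Xᴴ * diagonal (fun k => (d k : ℂ)) * X).IsDiag ↔
      ∑ k, (d k : ℂ) * (star (X k 0) * X k 1) = 0 := by
  have hΩ : (diagonal fun k => (d k : ℂ)).IsHermitian :=
    isHermitian_diagonal_of_self_adjoint _ (by ext k; simp)
  rw [(isHermitian_conjTranspose_mul_mul X hΩ).isDiag_fin_two_iff]
  simp [mul_apply, diagonal_apply, mul_comm, mul_left_comm]

lemma LinearIndependent.map_ofReal {ι n : Type*} [Fintype ι] {v : ι → n → ℝ}
    (hv : LinearIndependent ℝ v) : LinearIndependent ℂ (fun k i => (v k i : ℂ)) := by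
  rw [Fintype.linearIndependent_iff] at hv ⊢
  intro g hg k
  have hre := hv (fun k => (g k).re) <| by
    ext i
    simpa [Complex.re_sum, mul_comm] using congrArg re (congrFun hg i)
  have him := hv (fun k => (g k).im) <| by
    ext i
    simpa [Complex.im_sum, mul_comm] using congrArg im (congrFun hg i)
  exact Complex.ext (hre k) (him k)

lemma inG_two_of_forall_row_eq_zero {X : Matrix (Fin 2) (Fin 2) ℂ} (hX : IsUnit X.det)
    (h : ∀ k, X k 0 = 0 ∨ X k 1 = 0) : inG 2 X := by
  have hdet := hX.ne_zero
  rw [det_fin_two] at hdet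
  rcases h 0 with h00 | h01 <;> rcases h 1 with h10 | h11
  · simp [h00, h10] at hdet
  · refine inG_of_isDiag_mul_permMatrix hX (Equiv.swap 0 1) (isDiag_fin_two_iff.mpr ?_)
    simp [mul_permMatrix_apply, h00, h11]
  · refine inG_of_isDiag_mul_permMatrix hX 1 (isDiag_fin_two_iff.mpr ?_)
    simp [h01, h10]
  · simp [h01, h11] at hdet

lemma exists_ne_zero_sq_mul_ne {s t : ℝ} (h : s ≠ 0 ∨ t ≠ 0) :
    ∃ r : ℝ, r ≠ 0 ∧ r ^ 2 * s ≠ t := by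
  by_cases hst : s = t
  · subst hst
    exact ⟨2, two_ne_zero, fun h4 => h.elim id id (by linarith)⟩
  · exact ⟨1, one_ne_zero, by simpa using hst⟩

lemma exists_not_inG_two_star_mul_eq {s t : ℝ} (h : s ≠ 0 ∨ t ≠ 0) :
    ∃ X : Matrix (Fin 2) (Fin 2) ℂ, IsUnit X.det ∧ ¬ inG 2 X ∧
      star (X 0 0) * X 0 1 = s ∧ star (X 1 0) * X 1 1 = t := by
  obtain ⟨r, hr, hrst⟩ := exists_ne_zero_sq_mul_ne h
  have hrC : (r : ℂ) ≠ 0 := ofReal_ne_zero.mpr hr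
  refine ⟨!![1, (s : ℂ); (r : ℂ), (t / r : ℝ)], ?_, not_inG_of_column (i := 0) (i' := 1) (j := 0)
    (by decide) (by simp) (by simpa using hrC), by simp, ?_⟩
  · rw [isUnit_iff_ne_zero, det_fin_two_of]
    have hdet : t / r - s * r ≠ 0 := by
      rw [div_sub' hr, div_ne_zero_iff]
      exact ⟨fun h0 => hrst (by linear_combination -h0), hr⟩
    simpa using (ofReal_ne_zero.mpr hdet)
  · simpa [conj_ofReal] using mul_div_cancel₀ (t : ℂ) hrC

/-- For real diagonal matrices `Ω i = diagonal (ω i)`, every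
invertible complex `X` with all `Xᴴ Ω_i X` diagonal lies in `𝒢(2)` iff the
vectors of first and second diagonal entries are linearly independent over ℝ. -/
theorem stmt_3 (n : ℕ) (ω : Fin n → Fin 2 → ℝ) :
    (∀ X : Matrix (Fin 2) (Fin 2) ℂ, IsUnit X.det →
        (∀ i, (Xᴴ * Matrix.diagonal (fun k => (ω i k : ℂ)) * X).IsDiag) →
        inG 2 X) ↔
      LinearIndependent ℝ ![fun i => ω i 0, fun i => ω i 1] := by
  rw [show ![fun i => ω i 0, fun i => ω i 1] = fun k i => ω i k by ext k; fin_cases k <;> rfl]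
  simp_rw [isDiag_conjTranspose_mul_diagonal_ofReal_mul_iff]
  constructor
  · intro H
    by_contra hdep
    obtain ⟨c, hc, k, hk⟩ := Fintype.not_linearIndependent_iff.mp hdep
    obtain ⟨X, hX, hXG, h0, h1⟩ := exists_not_inG_two_star_mul_eq (s := c 0) (t := c 1)
      (by fin_cases k <;> simp_all)
    refine hXG (H X hX fun i => ?_)
    have hci := congrFun hc i
    simp only [Fin.sum_univ_two, Finset.sum_apply, Pi.smul_apply, smul_eq_mul,
      Pi.zero_apply] at hci
    rw [Fin.sum_univ_two, h0, h1]
    exact_mod_cast (by linear_combination hci : ω i 0 * c 0 + ω i 1 * c 1 = 0)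
  · intro hli X hX hdiag
    have hrow := Fintype.linearIndependent_iff.mp hli.map_ofReal
      (fun k => star (X k 0) * X k 1) <| by
        ext i
        simpa [mul_comm] using hdiag i
    refine inG_two_of_forall_row_eq_zero hX fun k => ?_
    simpa using hrow k
end

section
/- Let Ω₁, Ω₂ be 2×2 diagonal complex matrices with diagonal entries ω₁₁,ω₁₂ and ω₂₁,ω₂₂, with Ω₂ having real entries. If there exists an invertible 2×2 complex matrix X ∉ 𝒢(2) such that Xᴴ Ω₁ X̄ and Xᴴ Ω₂ X are both diagonal, then |ω₁₁|·|ω₂₂| = |ω₁₂|·|ω₂₁|. -/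
open Matrix Complex

/-!
Write `X = (xᵢⱼ)`. Taking norms in the vanishing `(0, 1)` entries of the two products gives
`‖ω₁ 0‖ ‖x₀₀ x₀₁‖ = ‖ω₁ 1‖ ‖x₁₀ x₁₁‖` and `|ω₂ 0| ‖x₀₀ x₀₁‖ = |ω₂ 1| ‖x₁₀ x₁₁‖`, so the
matrix `(‖ω₁ 0‖, ‖ω₁ 1‖; |ω₂ 0|, |ω₂ 1|)` kills `(‖x₀₀ x₀₁‖, -‖x₁₀ x₁₁‖)` and has determinant
zero as soon as this vector is nonzero. It is nonzero because otherwise every row of `X` has a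
zero entry, and an invertible such `X` is diagonal or antidiagonal, hence in `𝒢(2)`.
-/

theorem mul_eq_mul_of_mul_eq_mul_of_mul_eq_mul {R : Type*} [CommRing R] [NoZeroDivisors R]
    {w₀ w₁ v₀ v₁ p q : R} (hw : w₀ * p = w₁ * q) (hv : v₀ * p = v₁ * q) (hpq : p ≠ 0 ∨ q ≠ 0) :
    w₀ * v₁ = w₁ * v₀ := by
  rw [← sub_eq_zero]
  rcases hpq with hp | hq
  · refine (mul_eq_zero.1 ?_).resolve_right hp
    linear_combination v₁ * hw - w₁ * hv
  · refine (mul_eq_zero.1 ?_).resolve_right hq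
    linear_combination v₀ * hw - w₀ * hv

theorem inG_of_isDiag_submatrix {m : ℕ} {X : Matrix (Fin m) (Fin m) ℂ} (σ : Equiv.Perm (Fin m))
    (hX : IsUnit X.det) (h : (X.submatrix id σ).IsDiag) : inG m X := by
  refine ⟨X.submatrix id σ, σ, h, ?_, ?_⟩
  · rw [det_permute']
    exact ((Equiv.Perm.sign σ).isUnit.map (Int.castRingHom ℂ)).mul hX
  · rw [PEquiv.mul_toMatrix_toPEquiv, submatrix_submatrix]
    simp

theorem inG_two_of_mul_eq_zero {X : Matrix (Fin 2) (Fin 2) ℂ} (hX : IsUnit X.det)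
    (h₀ : X 0 0 * X 0 1 = 0) (h₁ : X 1 0 * X 1 1 = 0) : inG 2 X := by
  have hdet := hX
  rw [det_fin_two] at hdet
  rcases mul_eq_zero.1 h₀ with h₀ | h₀ <;> rcases mul_eq_zero.1 h₁ with h₁ | h₁
  · simp [h₀, h₁] at hdet
  · refine inG_of_isDiag_submatrix (Equiv.swap 0 1) hX fun i j hij => ?_
    fin_cases i <;> fin_cases j <;> simp_all
  · refine inG_of_isDiag_submatrix 1 hX fun i j hij => ?_
    fin_cases i <;> fin_cases j <;> simp_all
  · simp [h₀, h₁] at hdet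

theorem norm_mul_eq_of_isDiag_conjTranspose_mul_diagonal_mul {𝕜 : Type*} [RCLike 𝕜]
    {X Y : Matrix (Fin 2) (Fin 2) 𝕜} {ω : Fin 2 → 𝕜} (h : (Xᴴ * diagonal ω * Y).IsDiag) :
    ‖ω 0‖ * (‖X 0 0‖ * ‖Y 0 1‖) = ‖ω 1‖ * (‖X 1 0‖ * ‖Y 1 1‖) := by
  have h₀₁ : star (X 0 0) * ω 0 * Y 0 1 = -(star (X 1 0) * ω 1 * Y 1 1) := by
    rw [← add_eq_zero_iff_eq_neg]
    simpa [mul_apply, Fin.sum_univ_two] using h zero_ne_one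
  have h_norm := congrArg norm h₀₁
  simp only [norm_mul, norm_neg, norm_star] at h_norm
  linear_combination h_norm

/-- If some invertible `X ∉ 𝒢(2)` simultaneously diagonalizes
`Ω₁` via `Xᴴ Ω₁ X̄` and the real `Ω₂` via `Xᴴ Ω₂ X`, then
`|ω₁₁|·|ω₂₂| = |ω₁₂|·|ω₂₁|`. -/
theorem stmt_5 (ω₁ : Fin 2 → ℂ) (ω₂ : Fin 2 → ℝ)
    (X : Matrix (Fin 2) (Fin 2) ℂ) (hX : IsUnit X.det) (hXG : ¬ inG 2 X)
    (h1 : (Xᴴ * Matrix.diagonal ω₁ * X.map (starRingEnd ℂ)).IsDiag)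
    (h2 : (Xᴴ * Matrix.diagonal (fun k => (ω₂ k : ℂ)) * X).IsDiag) :
    ‖ω₁ 0‖ * |ω₂ 1| = ‖ω₁ 1‖ * |ω₂ 0| := by
  have hrows : ‖X 0 0‖ * ‖X 0 1‖ ≠ 0 ∨ ‖X 1 0‖ * ‖X 1 1‖ ≠ 0 := by
    by_contra! h
    exact hXG (inG_two_of_mul_eq_zero hX (by simpa using h.1) (by simpa using h.2))
  have e₁ := norm_mul_eq_of_isDiag_conjTranspose_mul_diagonal_mul h1
  have e₂ := norm_mul_eq_of_isDiag_conjTranspose_mul_diagonal_mul h2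
  simp only [map_apply, RCLike.norm_conj, norm_real, Real.norm_eq_abs] at e₁ e₂
  exact mul_eq_mul_of_mul_eq_mul_of_mul_eq_mul e₁ e₂ hrows
end

section
/- Let Ω₁ be a 2×2 diagonal complex matrix and Ω₂ a 2×2 diagonal real matrix, both invertible, with |ω₁₁|·|ω₂₂| = |ω₁₂|·|ω₂₁|. Then there exists an invertible 2×2 complex matrix X not in 𝒢(2) such that both Xᴴ Ω₁ X̄ and Xᴴ Ω₂ X are diagonal. -/
open Matrix Complex

/-!
Scaling the rows of `X` by `d₀, d₁` with `d₀² ω̄₁₀ = 1` and `d₁² ω̄₁₁ = ε`, for a real `ε` with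
`|ε| = 1`, replaces `Ω₁` by `diag(1, ε)` and `Ω₂` by `diag(ω₂₀ / |ω₁₀|, ω₂₁ / |ω₁₁|)`. The
hypothesis is exactly what makes the latter a real multiple of `diag(1, ε)` for
`ε := ω₂₁ |ω₁₀| / (ω₂₀ |ω₁₁|)`, so any invertible real matrix whose columns are orthogonal for
`diag(1, ε)`, such as `[[1, -2ε], [2, 1]]`, diagonalises both forms; having no zero entry, it is
not monomial.
-/

open ComplexConjugate

namespace Matrix

theorem isDiag_fin_two_iff_s6 {α : Type*} [Zero α] (A : Matrix (Fin 2) (Fin 2) α) :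
    A.IsDiag ↔ A 0 1 = 0 ∧ A 1 0 = 0 := by
  refine ⟨fun h => ⟨h (by decide), h (by decide)⟩, fun ⟨h01, h10⟩ i j hij => ?_⟩
  fin_cases i <;> fin_cases j <;> simp_all

end Matrix

theorem inG.mul_apply_eq_zero {m : ℕ} {X : Matrix (Fin m) (Fin m) ℂ} (hX : inG m X)
    (i : Fin m) {j j' : Fin m} (hjj' : j ≠ j') : X i j * X i j' = 0 := by
  obtain ⟨D, σ, hD, -, rfl⟩ := hX
  rw [← hD.diagonal_diag]
  simp only [diagonal_mul, Equiv.Perm.permMatrix, PEquiv.toMatrix_apply, Equiv.toPEquiv_apply,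
    Option.mem_def, Option.some.injEq]
  split_ifs <;> simp_all

theorem Complex.exists_sq_mul_conj_eq {z : ℂ} (hz : z ≠ 0) (u : ℝ) :
    ∃ d : ℂ, d ^ 2 * conj z = u ∧ ‖d‖ ^ 2 = |u| / ‖z‖ := by
  obtain ⟨d, hd⟩ := IsAlgClosed.exists_pow_nat_eq (u / conj z) two_pos
  refine ⟨d, by rw [hd, div_mul_cancel₀ _ ((map_ne_zero _).mpr hz)], ?_⟩
  rw [← norm_pow, hd, norm_div, Complex.norm_conj, Complex.norm_real, Real.norm_eq_abs]

def simulDiagonalizer (d₀ d₁ : ℂ) (ε : ℝ) : Matrix (Fin 2) (Fin 2) ℂ :=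
  !![d₀, -2 * ε * d₀; 2 * d₁, d₁]

section simulDiagonalizer

variable {d₀ d₁ : ℂ} {ε : ℝ}

theorem det_simulDiagonalizer (d₀ d₁ : ℂ) (ε : ℝ) :
    (simulDiagonalizer d₀ d₁ ε).det = d₀ * d₁ * (1 + 4 * ε) := by
  rw [simulDiagonalizer, det_fin_two_of]
  ring

theorem not_inG_simulDiagonalizer (hd₀ : d₀ ≠ 0) (hε : ε ≠ 0) :
    ¬ inG 2 (simulDiagonalizer d₀ d₁ ε) := fun h => by
  have := h.mul_apply_eq_zero 0 (j := 0) (j' := 1) (by decide)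
  simp [simulDiagonalizer, hd₀, hε] at this

theorem isDiag_simulDiagonalizer_conjTranspose_mul_diagonal_mul_map_conj {ω : Fin 2 → ℂ}
    (h₀ : d₀ ^ 2 * conj (ω 0) = 1) (h₁ : d₁ ^ 2 * conj (ω 1) = ε) :
    ((simulDiagonalizer d₀ d₁ ε)ᴴ * diagonal ω *
      (simulDiagonalizer d₀ d₁ ε).map (starRingEnd ℂ)).IsDiag := by
  have h₀' := congrArg conj h₀
  have h₁' := congrArg conj h₁
  simp only [map_mul, map_pow, Complex.conj_conj, map_one, Complex.conj_ofReal] at h₀' h₁'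
  rw [isDiag_fin_two_iff_s6]
  simp only [simulDiagonalizer, neg_mul, mul_apply, conjTranspose_apply, of_apply, cons_val',
    cons_val_zero, cons_val_fin_one, RCLike.star_def, Fin.sum_univ_two, cons_val_one, map_mul,
    map_ofNat, map_apply, diagonal_apply_eq, ne_eq, one_ne_zero, not_false_eq_true,
    diagonal_apply_ne, mul_zero, add_zero, map_neg, Complex.conj_ofReal, mul_neg, zero_ne_one,
    zero_add, neg_zero]
  constructor <;> linear_combination (-2 * ε) * h₀' + 2 * h₁'

theorem isDiag_simulDiagonalizer_conjTranspose_mul_diagonal_mul {ω : Fin 2 → ℝ}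
    (h : ε * ω 0 * ‖d₀‖ ^ 2 = ω 1 * ‖d₁‖ ^ 2) :
    ((simulDiagonalizer d₀ d₁ ε)ᴴ * diagonal (fun k => (ω k : ℂ)) *
      simulDiagonalizer d₀ d₁ ε).IsDiag := by
  have hC : (ε : ℂ) * ω 0 * (conj d₀ * d₀) = ω 1 * (conj d₁ * d₁) := by
    simp only [Complex.conj_mul']
    exact_mod_cast h
  rw [isDiag_fin_two_iff_s6]
  simp only [simulDiagonalizer, neg_mul, mul_apply, conjTranspose_apply, of_apply, cons_val',
    cons_val_zero, cons_val_fin_one, RCLike.star_def, Fin.sum_univ_two, cons_val_one, map_mul,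
    map_ofNat, diagonal_apply_eq, ne_eq, one_ne_zero, not_false_eq_true, diagonal_apply_ne,
    mul_zero, add_zero, mul_neg, zero_ne_one, zero_add, map_neg, Complex.conj_ofReal, neg_zero]
  constructor <;> linear_combination (-2) * hC

end simulDiagonalizer

/-- If `Ω₁` (complex diagonal) and `Ω₂` (real diagonal) are both
invertible and `|ω₁₁|·|ω₂₂| = |ω₁₂|·|ω₂₁|`, then there exists an invertible
`X ∉ 𝒢(2)` with both `Xᴴ Ω₁ X̄` and `Xᴴ Ω₂ X` diagonal. -/
theorem stmt_6 (ω₁ : Fin 2 → ℂ) (ω₂ : Fin 2 → ℝ)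
    (h1 : ∀ k, ω₁ k ≠ 0) (h2 : ∀ k, ω₂ k ≠ 0)
    (h : ‖ω₁ 0‖ * |ω₂ 1| = ‖ω₁ 1‖ * |ω₂ 0|) :
    ∃ X : Matrix (Fin 2) (Fin 2) ℂ, IsUnit X.det ∧ ¬ inG 2 X ∧
      (Xᴴ * Matrix.diagonal ω₁ * X.map (starRingEnd ℂ)).IsDiag ∧
      (Xᴴ * Matrix.diagonal (fun k => (ω₂ k : ℂ)) * X).IsDiag := by
  set ε : ℝ := ω₂ 1 * ‖ω₁ 0‖ / (ω₂ 0 * ‖ω₁ 1‖)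
  have hn : ∀ k, ‖ω₁ k‖ ≠ 0 := fun k => norm_ne_zero_iff.mpr (h1 k)
  have hε : |ε| = 1 := by
    rw [abs_div, abs_mul, abs_mul, abs_norm, abs_norm, div_eq_one_iff_eq, mul_comm, h, mul_comm]
    exact mul_ne_zero (abs_ne_zero.mpr (h2 0)) (hn 1)
  have hε₀ : ε ≠ 0 := abs_pos.mp (hε ▸ one_pos)
  have hε₄ : 1 + 4 * ε ≠ 0 := by
    rcases (abs_eq zero_le_one).mp hε with hε | hε <;> norm_num [hε]
  obtain ⟨d₀, hd₀, hnd₀⟩ := Complex.exists_sq_mul_conj_eq (h1 0) 1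
  obtain ⟨d₁, hd₁, hnd₁⟩ := Complex.exists_sq_mul_conj_eq (h1 1) ε
  have hd₀₀ : d₀ ≠ 0 :=
    ne_zero_pow two_ne_zero (left_ne_zero_of_mul (hd₀ ▸ ofReal_ne_zero.mpr one_ne_zero))
  have hd₁₀ : d₁ ≠ 0 :=
    ne_zero_pow two_ne_zero (left_ne_zero_of_mul (hd₁ ▸ ofReal_ne_zero.mpr hε₀))
  have hcompat : ε * ω₂ 0 * ‖d₀‖ ^ 2 = ω₂ 1 * ‖d₁‖ ^ 2 := by
    rw [hnd₀, hnd₁, hε, abs_one]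
    simp only [ε]
    field_simp [h2 0, hn 0, hn 1]
  refine ⟨simulDiagonalizer d₀ d₁ ε, ?_, not_inG_simulDiagonalizer hd₀₀ hε₀,
    isDiag_simulDiagonalizer_conjTranspose_mul_diagonal_mul_map_conj (by exact_mod_cast hd₀) hd₁,
    isDiag_simulDiagonalizer_conjTranspose_mul_diagonal_mul hcompat⟩
  rw [det_simulDiagonalizer, isUnit_iff_ne_zero]
  exact mul_ne_zero (mul_ne_zero hd₀₀ hd₁₀) (by exact_mod_cast hε₄)
end

section
/- Let A ∈ GL(m,ℂ), Ω₁ a complex diagonal matrix and Ω₂ a real diagonal matrix with positive entries, C₁ = A Ω₁ Aᴴ and C₂ = A Ω₂ Aᵀ. Let C₂ = U Σ Uᵀ with U unitary and Σ positive diagonal. Then C̃₁ := Σ^{-1/2} Uᴴ C₁ U Σ^{-1/2} can be written as V Λ Vᴴ with V complex orthogonal (Vᵀ V = I) and Λ = Ω₂^{-1/2} Ω₁ Ω₂^{-1/2} diagonal. -/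
open Matrix Complex

/-!
Put `V := Σ^{-1/2} Uᴴ A Ω₂^{1/2}`. Since `Ω₂^{1/2}` is real diagonal, `Ω₂^{1/2} (Ω₂^{1/2})ᵀ = Ω₂`,
so the Takagi factorization gives `V Vᵀ = Σ^{-1/2} (Uᴴ U) Σ (Uᵀ Ū) Σ^{-1/2} = 1`, i.e. `V` is complex
orthogonal. On the other hand `Ω₂^{1/2} Λ Ω₂^{1/2} = Ω₁`, so `V Λ Vᴴ = Σ^{-1/2} Uᴴ A Ω₁ Aᴴ U Σ^{-1/2}`.
-/

namespace Matrix

variable {n R : Type*} [Fintype n] [CommRing R] [StarRing R]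

theorem mul_transpose_self_eq_one_of_takagi [DecidableEq n] {P U A Q S : Matrix n n R}
    (hU : U ∈ unitaryGroup n R) (hTakagi : A * (Q * Qᵀ) * Aᵀ = U * S * Uᵀ)
    (hP : P * S * Pᵀ = 1) :
    (P * Uᴴ * A * Q) * (P * Uᴴ * A * Q)ᵀ = 1 := by
  have hUU : Uᴴ * U = 1 := mem_unitaryGroup_iff'.mp hU
  have hUtU : Uᵀ * Uᴴᵀ = 1 := by rw [← transpose_mul, hUU, transpose_one]
  calc (P * Uᴴ * A * Q) * (P * Uᴴ * A * Q)ᵀ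
      = P * Uᴴ * (A * (Q * Qᵀ) * Aᵀ) * Uᴴᵀ * Pᵀ := by
        simp only [transpose_mul, Matrix.mul_assoc]
    _ = P * (Uᴴ * U) * S * (Uᵀ * Uᴴᵀ) * Pᵀ := by
        rw [hTakagi]; simp only [Matrix.mul_assoc]
    _ = 1 := by rw [hUU, hUtU, Matrix.mul_one, Matrix.mul_one, hP]

theorem conj_mul_mul_conjTranspose_eq_of_factor {P U A Q Ω M : Matrix n n R}
    (hP : Pᴴ = P) (hQ : Q * M * Qᴴ = Ω) :
    P * Uᴴ * (A * Ω * Aᴴ) * U * P = (P * Uᴴ * A * Q) * M * (P * Uᴴ * A * Q)ᴴ := by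
  conv_lhs => rw [← hQ]
  simp only [conjTranspose_mul, conjTranspose_conjTranspose, hP, Matrix.mul_assoc]

end Matrix

section RealDiagonal

variable {n : Type*} [DecidableEq n]

theorem Matrix.conjTranspose_diagonal_ofReal (r : n → ℝ) :
    (diagonal fun i => (r i : ℂ))ᴴ = diagonal fun i => (r i : ℂ) := by
  simp only [diagonal_conjTranspose, Pi.star_def, RCLike.star_def, conj_ofReal]

variable [Fintype n]

theorem Matrix.diagonal_sqrt_mul_transpose {w : n → ℝ} (hw : ∀ i, 0 ≤ w i) :
    (diagonal fun i => (Real.sqrt (w i) : ℂ)) * (diagonal fun i => (Real.sqrt (w i) : ℂ))ᵀ =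
      diagonal fun i => (w i : ℂ) := by
  rw [diagonal_transpose, diagonal_mul_diagonal]
  congr 1
  funext i
  rw [← ofReal_mul, Real.mul_self_sqrt (hw i)]

theorem Matrix.diagonal_inv_sqrt_mul_mul_transpose {s : n → ℝ} (hs : ∀ i, 0 < s i) :
    (diagonal fun i => ((Real.sqrt (s i))⁻¹ : ℂ)) * diagonal (fun i => (s i : ℂ)) *
      (diagonal fun i => ((Real.sqrt (s i))⁻¹ : ℂ))ᵀ = 1 := by
  rw [diagonal_transpose, diagonal_mul_diagonal, diagonal_mul_diagonal, ← diagonal_one]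
  congr 1
  funext i
  have hsqrt : (Real.sqrt (s i) : ℂ) ≠ 0 := by exact_mod_cast (Real.sqrt_pos.mpr (hs i)).ne'
  field_simp
  rw [← ofReal_pow, Real.sq_sqrt (hs i).le]

theorem Matrix.diagonal_sqrt_mul_mul_conjTranspose {w : n → ℝ} (hw : ∀ i, 0 < w i)
    (d : n → ℂ) :
    (diagonal fun i => (Real.sqrt (w i) : ℂ)) *
        diagonal (fun i => ((Real.sqrt (w i))⁻¹ : ℂ) * d i * ((Real.sqrt (w i))⁻¹ : ℂ)) *
        (diagonal fun i => (Real.sqrt (w i) : ℂ))ᴴ = diagonal d := by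
  rw [conjTranspose_diagonal_ofReal, diagonal_mul_diagonal, diagonal_mul_diagonal]
  congr 1
  funext i
  have hsqrt : (Real.sqrt (w i) : ℂ) ≠ 0 := by exact_mod_cast (Real.sqrt_pos.mpr (hw i)).ne'
  field_simp

end RealDiagonal

theorem stmt_10_general (m : ℕ) (A U : Matrix (Fin m) (Fin m) ℂ)
    (ω₁ : Fin m → ℂ) (ω₂ σ : Fin m → ℝ)
    (hω₂ : ∀ i, 0 < ω₂ i) (hσ : ∀ i, 0 < σ i)
    (hU : U ∈ Matrix.unitaryGroup (Fin m) ℂ)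
    (hTakagi : A * Matrix.diagonal (fun i => (ω₂ i : ℂ)) * Aᵀ =
      U * Matrix.diagonal (fun i => (σ i : ℂ)) * Uᵀ) :
    ∃ V : Matrix (Fin m) (Fin m) ℂ, Vᵀ * V = 1 ∧
      Matrix.diagonal (fun i => ((Real.sqrt (σ i))⁻¹ : ℂ)) * Uᴴ *
          (A * Matrix.diagonal ω₁ * Aᴴ) * U *
          Matrix.diagonal (fun i => ((Real.sqrt (σ i))⁻¹ : ℂ)) =
        V * Matrix.diagonal (fun i => ((Real.sqrt (ω₂ i))⁻¹ : ℂ) * ω₁ i *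
          ((Real.sqrt (ω₂ i))⁻¹ : ℂ)) * Vᴴ := by
  have hσ_inv_sqrt : (diagonal fun i => ((Real.sqrt (σ i))⁻¹ : ℂ))ᴴ =
      diagonal fun i => ((Real.sqrt (σ i))⁻¹ : ℂ) := by
    simpa only [ofReal_inv] using conjTranspose_diagonal_ofReal fun i => (Real.sqrt (σ i))⁻¹
  rw [← diagonal_sqrt_mul_transpose fun i => (hω₂ i).le] at hTakagi
  refine ⟨_, mul_eq_one_comm.mp (mul_transpose_self_eq_one_of_takagi hU hTakagi
    (diagonal_inv_sqrt_mul_mul_transpose hσ)), ?_⟩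
  exact conj_mul_mul_conjTranspose_eq_of_factor hσ_inv_sqrt (diagonal_sqrt_mul_mul_conjTranspose hω₂ ω₁)

/-- With `C₁ = A Ω₁ Aᴴ`, `C₂ = A Ω₂ Aᵀ`, and a Takagi
factorization `C₂ = U Σ Uᵀ`, the matrix `C̃₁ = Σ^{-1/2} Uᴴ C₁ U Σ^{-1/2}` can
be written as `V Λ Vᴴ` with `V` complex orthogonal and
`Λ = Ω₂^{-1/2} Ω₁ Ω₂^{-1/2}` diagonal. -/
theorem stmt_10 (m : ℕ) (A U : Matrix (Fin m) (Fin m) ℂ)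
    (ω₁ : Fin m → ℂ) (ω₂ σ : Fin m → ℝ)
    (hA : IsUnit A.det)
    (hω₂ : ∀ i, 0 < ω₂ i) (hσ : ∀ i, 0 < σ i)
    (hU : U ∈ Matrix.unitaryGroup (Fin m) ℂ)
    (hTakagi : A * Matrix.diagonal (fun i => (ω₂ i : ℂ)) * Aᵀ =
      U * Matrix.diagonal (fun i => (σ i : ℂ)) * Uᵀ) :
    ∃ V : Matrix (Fin m) (Fin m) ℂ, Vᵀ * V = 1 ∧
      Matrix.diagonal (fun i => ((Real.sqrt (σ i))⁻¹ : ℂ)) * Uᴴ *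
          (A * Matrix.diagonal ω₁ * Aᴴ) * U *
          Matrix.diagonal (fun i => ((Real.sqrt (σ i))⁻¹ : ℂ)) =
        V * Matrix.diagonal (fun i => ((Real.sqrt (ω₂ i))⁻¹ : ℂ) * ω₁ i *
          ((Real.sqrt (ω₂ i))⁻¹ : ℂ)) * Vᴴ :=
  stmt_10_general m A U ω₁ ω₂ σ hω₂ hσ hU hTakagi
end

section
/- With the setup of the PUT lemma (C₁ = A Ω₁ Aᴴ, C₂ = A Ω₂ Aᵀ, C₂ = U Σ Uᵀ Takagi, C̃₁ = Σ^{-1/2} Uᴴ C₁ U Σ^{-1/2} = V Λ Vᴴ with Vᵀ V = I), the matrix X := U Σ^{-1/2} V̄ satisfies Xᴴ C₂ X̄ = I and Xᴴ C₁ X = Λ, which is diagonal. -/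
/-
Write `S = Σ^{-1/2}` and `X = U S V̄`. Since `S` is real diagonal, `Xᴴ = Vᵀ S Uᴴ` and
`X̄ = Ū S V`. Unitarity of `U` gives `Uᴴ U = 1` and, conjugating, `Uᵀ Ū = 1`, so
`Xᴴ C₂ X̄ = Vᵀ (S Σ S) V = Vᵀ V = 1`. Likewise
`Xᴴ C₁ X = Vᵀ (S Uᴴ C₁ U S) V̄ = (Vᵀ V) Λ (Vᴴ V̄) = Λ`,
where `Vᴴ V̄ = 1` is the conjugate of `Vᵀ V = 1`.
-/

open Matrix

namespace Matrix

section StarRing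

variable {m n R : Type*} [CommRing R] [StarRing R]

theorem conjTranspose_map_starRingEnd (M : Matrix m n R) : (M.map (starRingEnd R))ᴴ = Mᵀ := by
  ext i j
  simp [conjTranspose_apply, starRingEnd_apply]

theorem map_starRingEnd_map_starRingEnd (M : Matrix m n R) :
    (M.map (starRingEnd R)).map (starRingEnd R) = M := by
  ext i j
  simp

theorem conjTranspose_map_starRingEnd_eq_transpose (M : Matrix m n R) :
    Mᴴ.map (starRingEnd R) = Mᵀ := by
  ext i j
  simp [conjTranspose_apply, starRingEnd_apply]

theorem transpose_map_starRingEnd_eq_conjTranspose (M : Matrix m n R) :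
    Mᵀ.map (starRingEnd R) = Mᴴ := by
  ext i j
  simp [conjTranspose_apply, starRingEnd_apply]

variable [Fintype n] [DecidableEq n]

theorem map_starRingEnd_mul_eq_one {A B : Matrix n n R} (h : A * B = 1) :
    A.map (starRingEnd R) * B.map (starRingEnd R) = 1 := by
  rw [← Matrix.map_mul, h, Matrix.map_one _ (map_zero _) (map_one _)]

theorem transpose_mul_map_starRingEnd_of_mem_unitaryGroup {U : Matrix n n R}
    (hU : U ∈ unitaryGroup n R) : Uᵀ * U.map (starRingEnd R) = 1 := by
  rw [← conjTranspose_map_starRingEnd_eq_transpose]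
  exact map_starRingEnd_mul_eq_one (mem_unitaryGroup_iff'.mp hU)

theorem conjTranspose_mul_map_starRingEnd_of_transpose_mul_self {V : Matrix n n R}
    (hV : Vᵀ * V = 1) : Vᴴ * V.map (starRingEnd R) = 1 := by
  rw [← transpose_map_starRingEnd_eq_conjTranspose]
  exact map_starRingEnd_mul_eq_one hV

end StarRing

section InvSqrt

variable {n : Type*} [DecidableEq n]

theorem conjTranspose_diagonal_inv_sqrt (σ : n → ℝ) :
    (diagonal fun i => ((Real.sqrt (σ i))⁻¹ : ℂ))ᴴ =
      diagonal fun i => ((Real.sqrt (σ i))⁻¹ : ℂ) := by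
  rw [diagonal_conjTranspose]
  congr 1
  funext i
  simp

theorem map_starRingEnd_diagonal_inv_sqrt (σ : n → ℝ) :
    (diagonal fun i => ((Real.sqrt (σ i))⁻¹ : ℂ)).map (starRingEnd ℂ) =
      diagonal fun i => ((Real.sqrt (σ i))⁻¹ : ℂ) := by
  rw [diagonal_map (map_zero _)]
  congr 1
  funext i
  simp

theorem diagonal_inv_sqrt_mul_diagonal_mul_diagonal_inv_sqrt [Fintype n] {σ : n → ℝ}
    (hσ : ∀ i, 0 < σ i) :
    (diagonal fun i => ((Real.sqrt (σ i))⁻¹ : ℂ)) * diagonal (fun i => (σ i : ℂ)) *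
      (diagonal fun i => ((Real.sqrt (σ i))⁻¹ : ℂ)) = 1 := by
  rw [diagonal_mul_diagonal, diagonal_mul_diagonal, ← diagonal_one]
  congr 1
  funext i
  have hsqrt : (Real.sqrt (σ i) : ℂ) ≠ 0 := by exact_mod_cast (Real.sqrt_pos.mpr (hσ i)).ne'
  field_simp
  exact_mod_cast (Real.sq_sqrt (hσ i).le).symm

end InvSqrt

end Matrix

theorem stmt_11_general (m : ℕ) (U V C₁ C₂ : Matrix (Fin m) (Fin m) ℂ)
    (lam : Fin m → ℂ) (σ : Fin m → ℝ)
    (hσ : ∀ i, 0 < σ i)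
    (hU : U ∈ Matrix.unitaryGroup (Fin m) ℂ)
    (hTakagi : C₂ = U * Matrix.diagonal (fun i => (σ i : ℂ)) * Uᵀ)
    (hV : Vᵀ * V = 1)
    (hVLV : Matrix.diagonal (fun i => ((Real.sqrt (σ i))⁻¹ : ℂ)) * Uᴴ * C₁ * U *
        Matrix.diagonal (fun i => ((Real.sqrt (σ i))⁻¹ : ℂ)) =
      V * Matrix.diagonal lam * Vᴴ) :
    (U * Matrix.diagonal (fun i => ((Real.sqrt (σ i))⁻¹ : ℂ)) *
          V.map (starRingEnd ℂ))ᴴ * C₂ *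
        ((U * Matrix.diagonal (fun i => ((Real.sqrt (σ i))⁻¹ : ℂ)) *
          V.map (starRingEnd ℂ)).map (starRingEnd ℂ)) = 1 ∧
    (U * Matrix.diagonal (fun i => ((Real.sqrt (σ i))⁻¹ : ℂ)) *
          V.map (starRingEnd ℂ))ᴴ * C₁ *
        (U * Matrix.diagonal (fun i => ((Real.sqrt (σ i))⁻¹ : ℂ)) *
          V.map (starRingEnd ℂ)) = Matrix.diagonal lam := by
  set S := Matrix.diagonal fun i => ((Real.sqrt (σ i))⁻¹ : ℂ)
  have hXH : (U * S * V.map (starRingEnd ℂ))ᴴ = Vᵀ * S * Uᴴ := by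
    rw [conjTranspose_mul, conjTranspose_mul, conjTranspose_map_starRingEnd,
      conjTranspose_diagonal_inv_sqrt, Matrix.mul_assoc]
  have hXbar : (U * S * V.map (starRingEnd ℂ)).map (starRingEnd ℂ) =
      U.map (starRingEnd ℂ) * S * V := by
    rw [Matrix.map_mul, Matrix.map_mul, map_starRingEnd_diagonal_inv_sqrt,
      map_starRingEnd_map_starRingEnd]
  have hUU : Uᴴ * U = 1 := mem_unitaryGroup_iff'.mp hU
  rw [hXH, hXbar]
  constructor
  · calc Vᵀ * S * Uᴴ * C₂ * (U.map (starRingEnd ℂ) * S * V)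
          = Vᵀ * (S * (Uᴴ * U) * diagonal (fun i => (σ i : ℂ)) *
              (Uᵀ * U.map (starRingEnd ℂ)) * S) * V := by
            simp only [hTakagi, Matrix.mul_assoc]
      _ = Vᵀ * V := by
            rw [hUU, transpose_mul_map_starRingEnd_of_mem_unitaryGroup hU,
              Matrix.mul_one, Matrix.mul_one,
              diagonal_inv_sqrt_mul_diagonal_mul_diagonal_inv_sqrt hσ, Matrix.mul_one]
      _ = 1 := hV
  · calc Vᵀ * S * Uᴴ * C₁ * (U * S * V.map (starRingEnd ℂ))
          = Vᵀ * (S * Uᴴ * C₁ * U * S) * V.map (starRingEnd ℂ) := by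
            simp only [Matrix.mul_assoc]
      _ = (Vᵀ * V) * diagonal lam * (Vᴴ * V.map (starRingEnd ℂ)) := by
            rw [hVLV]
            simp only [Matrix.mul_assoc]
      _ = diagonal lam := by
            rw [hV, conjTranspose_mul_map_starRingEnd_of_transpose_mul_self hV, Matrix.one_mul,
              Matrix.mul_one]

/-- In the PUT setup, `X := U Σ^{-1/2} V̄` satisfies
`Xᴴ C₂ X̄ = I` and `Xᴴ C₁ X = Λ`, which is diagonal. -/
theorem stmt_11 (m : ℕ) (A U V C₁ C₂ : Matrix (Fin m) (Fin m) ℂ)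
    (ω₁ lam : Fin m → ℂ) (ω₂ σ : Fin m → ℝ)
    (hA : IsUnit A.det)
    (hω₂ : ∀ i, 0 < ω₂ i) (hσ : ∀ i, 0 < σ i)
    (hC₁ : C₁ = A * Matrix.diagonal ω₁ * Aᴴ)
    (hC₂ : C₂ = A * Matrix.diagonal (fun i => (ω₂ i : ℂ)) * Aᵀ)
    (hU : U ∈ Matrix.unitaryGroup (Fin m) ℂ)
    (hTakagi : C₂ = U * Matrix.diagonal (fun i => (σ i : ℂ)) * Uᵀ)
    (hV : Vᵀ * V = 1)
    (hVLV : Matrix.diagonal (fun i => ((Real.sqrt (σ i))⁻¹ : ℂ)) * Uᴴ * C₁ * U *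
        Matrix.diagonal (fun i => ((Real.sqrt (σ i))⁻¹ : ℂ)) =
      V * Matrix.diagonal lam * Vᴴ) :
    (U * Matrix.diagonal (fun i => ((Real.sqrt (σ i))⁻¹ : ℂ)) *
          V.map (starRingEnd ℂ))ᴴ * C₂ *
        ((U * Matrix.diagonal (fun i => ((Real.sqrt (σ i))⁻¹ : ℂ)) *
          V.map (starRingEnd ℂ)).map (starRingEnd ℂ)) = 1 ∧
    (U * Matrix.diagonal (fun i => ((Real.sqrt (σ i))⁻¹ : ℂ)) *
          V.map (starRingEnd ℂ))ᴴ * C₁ *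
        (U * Matrix.diagonal (fun i => ((Real.sqrt (σ i))⁻¹ : ℂ)) *
          V.map (starRingEnd ℂ)) = Matrix.diagonal lam :=
  stmt_11_general m U V C₁ C₂ lam σ hσ hU hTakagi hV hVLV
end

section
/- Let Ω₁,…,Ωₙ be diagonal m×m complex matrices (m ≥ 2) such that for some invertible Ω₁ and some matrix X ∈ GL(m,ℂ) ∖ 𝒢(m), all Xᴴ Ω_i X̄ are diagonal. Then there exists a pair k ≠ l with ω_{ik}/ω_{1k} = ω_{il}/ω_{1l} for all i, i.e., the vectors (ω_{1k},…,ω_{nk}) and (ω_{1l},…,ω_{nl}) are collinear. -/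
open Matrix Complex

/-- Let `Ω i = diagonal (ω i)` (`i : Fin n`, `n ≥ 1`, size `m ≥ 2`)
with `Ω 0` invertible. If some invertible `X ∉ 𝒢(m)` makes all `Xᴴ Ω_i X̄`
diagonal, then two columns of diagonal entries are collinear:
`ω i k / ω 0 k = ω i l / ω 0 l` for all `i`. -/
theorem stmt_15 (m n : ℕ) (hm : 2 ≤ m) (hn : 1 ≤ n)
    (ω : Fin n → Fin m → ℂ)
    (h0 : ∀ k, ω ⟨0, hn⟩ k ≠ 0)
    (X : Matrix (Fin m) (Fin m) ℂ) (hX : IsUnit X.det) (hXG : ¬ inG m X)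
    (hdiag : ∀ i, (Xᴴ * Matrix.diagonal (ω i) * X.map (starRingEnd ℂ)).IsDiag) :
    ∃ k l : Fin m, k ≠ l ∧
      ∀ i, ω i k / ω ⟨0, hn⟩ k = ω i l / ω ⟨0, hn⟩ l := by
  by_contra hcon
  push_neg at hcon
  set i0 : Fin n := ⟨0, hn⟩ with hi0
  set Y : Matrix (Fin m) (Fin m) ℂ := Xᴴ with hY
  set B : Matrix (Fin m) (Fin m) ℂ := X.map (starRingEnd ℂ) with hB
  have hYdet : Y.det ≠ 0 := by
    have : IsUnit Y.det := by
      rw [hY, Matrix.det_conjTranspose]; exact hX.star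
    exact this.ne_zero
  have hBdet : IsUnit B.det := by
    have : (starRingEnd ℂ) X.det = B.det := RingHom.map_det (starRingEnd ℂ) X
    rw [← this]; exact hX.map _
  set lam : Fin n → Fin m → ℂ := fun i j => (Y * Matrix.diagonal (ω i) * B) j j with hlam
  have hA : ∀ i, Y * Matrix.diagonal (ω i) * B = Matrix.diagonal (lam i) := fun i =>
    ((hdiag i).diagonal_diag).symm
  set C := B⁻¹ with hC
  have hBC : B * C = 1 := Matrix.mul_nonsing_inv B hBdet
  have key : ∀ i j k, Y j k * ω i k = lam i j * C j k := by
    intro i j k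
    have h1 : Y * Matrix.diagonal (ω i) = Matrix.diagonal (lam i) * C := by
      calc Y * Matrix.diagonal (ω i)
          = Y * Matrix.diagonal (ω i) * (B * C) := by rw [hBC, Matrix.mul_one]
        _ = (Y * Matrix.diagonal (ω i) * B) * C := by simp only [Matrix.mul_assoc]
        _ = Matrix.diagonal (lam i) * C := by rw [hA]
    have h2 := congrFun (congrFun h1 j) k
    simpa [Matrix.mul_diagonal, Matrix.diagonal_mul] using h2
  have hlam0 : ∀ j, lam i0 j ≠ 0 := by
    intro j
    have hdet : (Matrix.diagonal (lam i0)).det ≠ 0 := by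
      rw [← hA]
      have h1 : (Matrix.diagonal (ω i0)).det ≠ 0 := by
        rw [Matrix.det_diagonal]
        exact Finset.prod_ne_zero_iff.mpr fun k _ => h0 k
      simp only [Matrix.det_mul]
      exact mul_ne_zero (mul_ne_zero hYdet h1) hBdet.ne_zero
    rw [Matrix.det_diagonal] at hdet
    exact fun h => hdet (Finset.prod_eq_zero (Finset.mem_univ j) h)
  have ratio : ∀ j k, Y j k ≠ 0 → ∀ i, ω i k / ω i0 k = lam i j / lam i0 j := by
    intro j k hjk i
    rw [div_eq_div_iff (h0 k) (hlam0 j)]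
    have h1 := key i j k
    have h2 := key i0 j k
    apply mul_right_cancel₀ hjk
    calc ω i k * lam i0 j * Y j k = lam i0 j * (Y j k * ω i k) := by ring
      _ = lam i0 j * (lam i j * C j k) := by rw [h1]
      _ = lam i j * (lam i0 j * C j k) := by ring
      _ = lam i j * (Y j k * ω i0 k) := by rw [h2]
      _ = lam i j * ω i0 k * Y j k := by ring
  have unique : ∀ j k l, Y j k ≠ 0 → Y j l ≠ 0 → k = l := by
    intro j k l hk hl
    by_contra hkl
    obtain ⟨i, hi⟩ := hcon k l hkl
    exact hi ((ratio j k hk i).trans (ratio j l hl i).symm)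
  have rownz : ∀ j, ∃ k, Y j k ≠ 0 := by
    intro j
    by_contra h
    push_neg at h
    exact hYdet (Matrix.det_eq_zero_of_row_eq_zero j h)
  have colnz : ∀ k, ∃ j, Y j k ≠ 0 := by
    intro k
    by_contra h
    push_neg at h
    exact hYdet (Matrix.det_eq_zero_of_column_eq_zero k h)
  set f : Fin m → Fin m := fun j => (rownz j).choose with hf
  have hfnz : ∀ j, Y j (f j) ≠ 0 := fun j => (rownz j).choose_spec
  have hfsurj : Function.Surjective f := by
    intro k
    obtain ⟨j, hj⟩ := colnz k
    exact ⟨j, unique j (f j) k (hfnz j) hj⟩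
  have hfbij : Function.Bijective f := Finite.surjective_iff_bijective.mp hfsurj
  set σ : Equiv.Perm (Fin m) := Equiv.ofBijective f hfbij with hσ
  have hσap : ∀ j, σ j = f j := fun j => rfl
  have hfsy : ∀ j, f (σ.symm j) = j := by
    intro j
    have := σ.apply_symm_apply j
    rwa [hσap] at this
  apply hXG
  refine ⟨Matrix.diagonal (fun j => star (Y (σ.symm j) j)), σ.symm,
    Matrix.isDiag_diagonal _, ?_, ?_⟩
  · rw [Matrix.det_diagonal, isUnit_iff_ne_zero]
    apply Finset.prod_ne_zero_iff.mpr
    intro j _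
    have h1 : Y (σ.symm j) (f (σ.symm j)) ≠ 0 := hfnz _
    rw [hfsy j] at h1
    simpa using h1
  · ext j k
    have hXjk : X j k = star (Y k j) := by
      simp [hY]
    have hperm : (Equiv.Perm.permMatrix ℂ σ.symm) j k = if σ.symm j = k then 1 else 0 := by
      simp [Equiv.Perm.permMatrix, PEquiv.toMatrix_apply, Equiv.toPEquiv_apply, eq_comm]
    rw [Matrix.diagonal_mul, hperm, hXjk]
    by_cases hk : σ.symm j = k
    · subst hk
      have : σ (σ.symm j) = j := σ.apply_symm_apply j
      simp
    · have hYkj : Y k j = 0 := by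
        by_contra hne
        have hfk : f k = j := unique k (f k) j (hfnz k) hne
        apply hk
        rw [← hfk, ← hσap]
        exact σ.symm_apply_apply k
      simp [hYkj, hk]
end
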